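/- In the unlearning setup, for any fixed symmetric d×d real matrix N and any step k, the expectation over the Bernoulli batch selections at step k satisfies E[J_kᵀ N J_k] = J N J + C_f Σ_{f=1}^{n_f} H_f^F N H_f^F + C_r Σ_{r=1}^{n_r} H_r^R N H_r^R. -/

import Mathlib

open Matrix Filter Finset Set
open scoped BigOperators

noncomputable section

/-- Frobenius norm of a real square matrix. -/
def frob {n : Type*} [Fintype n] (M : Matrix n n ℝ) : ℝ :=
  Real.sqrt (∑ i, ∑ j, (M i j) ^ 2)

open Classical in
/-- The positive semidefinite square root of a matrix (junk value `0` on non-PSD input). -/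
def psdSqrt {n : Type*} [Fintype n] [DecidableEq n] (A : Matrix n n ℝ) : Matrix n n ℝ :=
  if h : A.PosSemidef then
    h.1.eigenvectorUnitary.1 * diagonal ((↑) ∘ (√·) ∘ h.1.eigenvalues) *
      (star h.1.eigenvectorUnitary : Matrix n n ℝ)
  else 0

open Classical in
/-- The largest eigenvalue of a symmetric real matrix (junk value `0` otherwise). -/
def lamMax {n : Type*} [Fintype n] [DecidableEq n] (A : Matrix n n ℝ) : ℝ :=
  if h : A.IsHermitian then ⨆ i, h.eigenvalues i else 0

/-- Probability of observing the Bernoulli(B/n) selection pattern `x`. -/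
def selProb (n B : ℕ) (x : Fin n → Bool) : ℝ :=
  ∏ i, if x i then (B : ℝ) / n else 1 - (B : ℝ) / n

/-- Average Hessian of a family. -/
def Hbar {d n : ℕ} (H : Fin n → Matrix (Fin d) (Fin d) ℝ) : Matrix (Fin d) (Fin d) ℝ :=
  (n : ℝ)⁻¹ • ∑ i, H i

/-- Mean update operator `J = I − η(1−α)H_R + ηα H_F`. -/
def Jbar {d nr nf : ℕ} (η α : ℝ) (HR : Fin nr → Matrix (Fin d) (Fin d) ℝ)
    (HF : Fin nf → Matrix (Fin d) (Fin d) ℝ) : Matrix (Fin d) (Fin d) ℝ :=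
  1 - (η * (1 - α)) • Hbar HR + (η * α) • Hbar HF

/-- Random update operator for the batch-selection pattern `x`. -/
def Jop {d nr nf : ℕ} (η α : ℝ) (B : ℕ) (HR : Fin nr → Matrix (Fin d) (Fin d) ℝ)
    (HF : Fin nf → Matrix (Fin d) (Fin d) ℝ)
    (x : (Fin nr → Bool) × (Fin nf → Bool)) : Matrix (Fin d) (Fin d) ℝ :=
  1 - (η * (1 - α) / B) • (∑ r, if x.1 r then HR r else 0)
    + (η * α / B) • (∑ f, if x.2 f then HF f else 0)

/-- `C_r = η²(1−α)²(1/n_r)(1/B − 1/n_r)`. -/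
def Crc (η α : ℝ) (B nr : ℕ) : ℝ :=
  η ^ 2 * (1 - α) ^ 2 * (nr : ℝ)⁻¹ * ((B : ℝ)⁻¹ - (nr : ℝ)⁻¹)

/-- `C_f = η²α²(1/n_f)(1/B − 1/n_f)`. -/
def Cfc (η α : ℝ) (B nf : ℕ) : ℝ :=
  η ^ 2 * α ^ 2 * (nf : ℝ)⁻¹ * ((B : ℝ)⁻¹ - (nf : ℝ)⁻¹)

/-- Noise-accumulation matrices `N_k`. -/
def Nmat {d nr nf : ℕ} (η α : ℝ) (B : ℕ) (HR : Fin nr → Matrix (Fin d) (Fin d) ℝ)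
    (HF : Fin nf → Matrix (Fin d) (Fin d) ℝ) : ℕ → Matrix (Fin d) (Fin d) ℝ
  | 0 => 1
  | k + 1 =>
      Cfc η α B nf • ∑ f, HF f * Nmat η α B HR HF k * HF f
        + Crc η α B nr • ∑ r, HR r * Nmat η α B HR HF k * HR r

/-- `W_k = J_{k−1} ⋯ J_1 J_0` for a finite sequence of batch selections. -/
def Wk {d nr nf : ℕ} (η α : ℝ) (B : ℕ) (HR : Fin nr → Matrix (Fin d) (Fin d) ℝ)
    (HF : Fin nf → Matrix (Fin d) (Fin d) ℝ) {k : ℕ}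
    (s : Fin k → (Fin nr → Bool) × (Fin nf → Bool)) : Matrix (Fin d) (Fin d) ℝ :=
  (List.ofFn fun i => Jop η α B HR HF (s i)).reverse.prod

/-- `E‖w_k‖² = E Tr(W_k W_kᵀ)`, the expectation taken over the i.i.d. Bernoulli
batch selections of the `k` steps. -/
def Ewk2 {d nr nf : ℕ} (η α : ℝ) (B : ℕ) (HR : Fin nr → Matrix (Fin d) (Fin d) ℝ)
    (HF : Fin nf → Matrix (Fin d) (Fin d) ℝ) (k : ℕ) : ℝ :=
  ∑ s : Fin k → (Fin nr → Bool) × (Fin nf → Bool),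
    (∏ i, selProb nr B (s i).1 * selProb nf B (s i).2) *
      (Wk η α B HR HF s * (Wk η α B HR HF s)ᵀ).trace

/-- `E[(e₁ᵀ w_k)²]`, i.e. the `(i0,i0)` entry of `E[W_k W_kᵀ]`. -/
def Ee1 {d nr nf : ℕ} (η α : ℝ) (B : ℕ) (HR : Fin nr → Matrix (Fin d) (Fin d) ℝ)
    (HF : Fin nf → Matrix (Fin d) (Fin d) ℝ) (i0 : Fin d) (k : ℕ) : ℝ :=
  ∑ s : Fin k → (Fin nr → Bool) × (Fin nf → Bool),
    (∏ i, selProb nr B (s i).1 * selProb nf B (s i).2) *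
      ((Wk η α B HR HF s * (Wk η α B HR HF s)ᵀ) i0 i0)

/-- Mixed Hessian `D_{rf} = C'_r H_r^R + C'_f H_f^F` for a retain/forget pair. -/
def Drf {d nr nf : ℕ} (Cr' Cf' : ℝ) (HR : Fin nr → Matrix (Fin d) (Fin d) ℝ)
    (HF : Fin nf → Matrix (Fin d) (Fin d) ℝ) (p : Fin nr × Fin nf) :
    Matrix (Fin d) (Fin d) ℝ :=
  Cr' • HR p.1 + Cf' • HF p.2

/-- Mix-Hessian `D = (1/(n_r n_f)) Σ_{r,f} D_{rf}`. -/
def Dmix {d nr nf : ℕ} (Cr' Cf' : ℝ) (HR : Fin nr → Matrix (Fin d) (Fin d) ℝ)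
    (HF : Fin nf → Matrix (Fin d) (Fin d) ℝ) : Matrix (Fin d) (Fin d) ℝ :=
  ((nr : ℝ) * nf)⁻¹ • ∑ p : Fin nr × Fin nf, Drf Cr' Cf' HR HF p

/-- Mix-coherence matrix `S_{(r,f),(r',f')} = ‖D_{rf}^{1/2} D_{r'f'}^{1/2}‖_F`. -/
def Smat {d nr nf : ℕ} (Cr' Cf' : ℝ) (HR : Fin nr → Matrix (Fin d) (Fin d) ℝ)
    (HF : Fin nf → Matrix (Fin d) (Fin d) ℝ) :
    Matrix (Fin nr × Fin nf) (Fin nr × Fin nf) ℝ :=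
  Matrix.of fun p q =>
    frob (psdSqrt (Drf Cr' Cf' HR HF p) * psdSqrt (Drf Cr' Cf' HR HF q))

/-- Unlearning coherence `σ = λ_max(S) / max_{(r,f)} λ_max(D_{rf})`. -/
def cohSigma {d nr nf : ℕ} (Cr' Cf' : ℝ) (HR : Fin nr → Matrix (Fin d) (Fin d) ℝ)
    (HF : Fin nf → Matrix (Fin d) (Fin d) ℝ) : ℝ :=
  lamMax (Smat Cr' Cf' HR HF) / ⨆ p : Fin nr × Fin nf, lamMax (Drf Cr' Cf' HR HF p)

/-- Stacked filter-weight vector of the two-layer ReLU CNN signal-plus-noise model. -/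
def wvec (d mfil : ℕ) (μ ξi : Fin d → ℝ) (yi : ℝ)
    (ai bi : Bool → Fin mfil → Bool) : (Bool × Fin mfil) × Fin d → ℝ :=
  fun p =>
    ((if p.1.1 then (1 : ℝ) else -1) / mfil) *
      ((if ai p.1.1 p.1.2 then (1 : ℝ) else 0) * μ p.2 +
        (if bi p.1.1 p.1.2 then (1 : ℝ) else 0) * yi * ξi p.2)

/-- Per-sample Hessian `H_i = ℓ''_i w_i w_iᵀ` of the signal-plus-noise model. -/
def hessCNN (d mfil : ℕ) (μ ξi : Fin d → ℝ) (yi ℓi : ℝ)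
    (ai bi : Bool → Fin mfil → Bool) :
    Matrix ((Bool × Fin mfil) × Fin d) ((Bool × Fin mfil) × Fin d) ℝ :=
  ℓi • vecMulVec (wvec d mfil μ ξi yi ai bi) (wvec d mfil μ ξi yi ai bi)

/-- Mixed Hessian `D_{rf} = C'_r H_r + C'_f H_{n_r+f}` in the CNN model, with the
retain set given by the first `n_r` samples and the forget set by the last `n_f`. -/
def DrfCNN (d mfil nr nf : ℕ) (μ : Fin d → ℝ) (ξ : Fin (nr + nf) → Fin d → ℝ)
    (y ℓ : Fin (nr + nf) → ℝ) (a b : Fin (nr + nf) → Bool → Fin mfil → Bool)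
    (Cr' Cf' : ℝ) (p : Fin nr × Fin nf) :
    Matrix ((Bool × Fin mfil) × Fin d) ((Bool × Fin mfil) × Fin d) ℝ :=
  Cr' • hessCNN d mfil μ (ξ (Fin.castAdd nf p.1)) (y (Fin.castAdd nf p.1))
        (ℓ (Fin.castAdd nf p.1)) (a (Fin.castAdd nf p.1)) (b (Fin.castAdd nf p.1))
    + Cf' • hessCNN d mfil μ (ξ (Fin.natAdd nr p.2)) (y (Fin.natAdd nr p.2))
        (ℓ (Fin.natAdd nr p.2)) (a (Fin.natAdd nr p.2)) (b (Fin.natAdd nr p.2))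

/-- Mix-coherence matrix of the CNN model. -/
def SmatCNN (d mfil nr nf : ℕ) (μ : Fin d → ℝ) (ξ : Fin (nr + nf) → Fin d → ℝ)
    (y ℓ : Fin (nr + nf) → ℝ) (a b : Fin (nr + nf) → Bool → Fin mfil → Bool)
    (Cr' Cf' : ℝ) : Matrix (Fin nr × Fin nf) (Fin nr × Fin nf) ℝ :=
  Matrix.of fun p q =>
    frob (psdSqrt (DrfCNN d mfil nr nf μ ξ y ℓ a b Cr' Cf' p) *
      psdSqrt (DrfCNN d mfil nr nf μ ξ y ℓ a b Cr' Cf' q))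

/-! Read the two selection patterns as one Bernoulli vector indexed by `Fin nr ⊕ Fin nf`.
Then `J_k = 1 + Σ_i c_i M_i` with independent indicators `c_i` of means `q_i`, so `E[J_k] = J`
and `E[J_k N J_k] = J N J + E[(J_k - J) N (J_k - J)]`. The centred indicators are uncorrelated,
so only the diagonal terms `q_i (1 - q_i) M_i N M_i` survive; these are the `C_f` and `C_r`
terms. Symmetry of the Hessians gives `J_kᵀ = J_k`. -/

section SecondMoment

variable {𝕜 R X ι : Type*} [CommRing 𝕜] [Ring R] [Algebra 𝕜 R] [Fintype X] [Fintype ι]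

theorem sum_smul_mul_mul_eq_mean_add_sum_centered (w : X → 𝕜) (hw : ∑ x, w x = 1)
    (Y : X → R) (N : R) :
    ∑ x, w x • (Y x * N * Y x) =
      (∑ x, w x • Y x) * N * (∑ x, w x • Y x) +
        ∑ x, w x • ((Y x - ∑ x', w x' • Y x') * N * (Y x - ∑ x', w x' • Y x')) := by
  set m := ∑ x, w x • Y x
  have hcentered : ∑ x, w x • (Y x - m) = 0 := by
    simp only [smul_sub, sum_sub_distrib, ← sum_smul, hw, one_smul, m, sub_self]
  have hexpand : ∀ x, Y x * N * Y x =
      m * N * m + (Y x - m) * N * m + m * N * (Y x - m) + (Y x - m) * N * (Y x - m) := by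
    intro x; noncomm_ring
  have hleft : ∑ x, w x • ((Y x - m) * N * m) = 0 := by
    simp only [← smul_mul_assoc, ← sum_mul, hcentered, zero_mul]
  have hright : ∑ x, w x • (m * N * (Y x - m)) = 0 := by
    simp only [← mul_smul_comm, ← mul_sum, hcentered, mul_zero]
  simp only [hexpand, smul_add, sum_add_distrib, hleft, hright, ← sum_smul, hw, one_smul,
    add_zero]

theorem sum_smul_mul_mul_of_uncorrelated (w : X → 𝕜) (a : ι → X → 𝕜) (M : ι → R) (N : R)
    (h : ∀ i j, i ≠ j → ∑ x, w x * (a i x * a j x) = 0) :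
    ∑ x, w x • ((∑ i, a i x • M i) * N * (∑ j, a j x • M j)) =
      ∑ i, (∑ x, w x * a i x ^ 2) • (M i * N * M i) := by
  have hexpand : ∀ x, w x • ((∑ i, a i x • M i) * N * (∑ j, a j x • M j)) =
      ∑ i, ∑ j, (w x * (a i x * a j x)) • (M i * N * M j) := by
    intro x
    simp only [sum_mul, mul_sum, smul_sum, smul_mul_assoc, mul_smul_comm, smul_smul, mul_assoc]
    rw [sum_comm]
    simp only [mul_comm (a _ x) (a _ x)]
  rw [sum_congr rfl fun x _ => hexpand x, sum_comm]
  refine sum_congr rfl fun i _ => ?_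
  rw [sum_comm, sum_eq_single i (fun j _ hji => by rw [← sum_smul, h i j hji.symm, zero_smul])
    (by simp), ← sum_smul]
  simp only [sq]

end SecondMoment

section Bernoulli

variable {𝕜 R ι : Type*} [CommRing 𝕜] [Ring R] [Algebra 𝕜 R] [Fintype ι] [DecidableEq ι]

def bernoulliWeight (q : ι → 𝕜) (x : ι → Bool) : 𝕜 :=
  ∏ i, if x i then q i else 1 - q i

theorem sum_bernoulliWeight_mul_prod (q : ι → 𝕜) (g : ι → Bool → 𝕜) :
    ∑ x, bernoulliWeight q x * ∏ i, g i (x i) =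
      ∏ i, (q i * g i true + (1 - q i) * g i false) := by
  have hfactor : ∀ x, bernoulliWeight q x * ∏ i, g i (x i) =
      ∏ i, (if x i then q i else 1 - q i) * g i (x i) := fun x ↦ by
    rw [bernoulliWeight, prod_mul_distrib]
  rw [sum_congr rfl fun x _ => hfactor x,
    ← Fintype.prod_sum fun i (b : Bool) => (if b then q i else 1 - q i) * g i b]
  simp

theorem sum_bernoulliWeight (q : ι → 𝕜) : ∑ x, bernoulliWeight q x = 1 := by
  simpa using sum_bernoulliWeight_mul_prod q 1

theorem sum_bernoulliWeight_mul_apply (q : ι → 𝕜) (i : ι) (f : Bool → 𝕜) :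
    ∑ x, bernoulliWeight q x * f (x i) = q i * f true + (1 - q i) * f false := by
  have := sum_bernoulliWeight_mul_prod q (Pi.mulSingle i f)
  rwa [Fintype.prod_eq_single i (fun k hk => by simp [hk]),
    sum_congr rfl fun x _ => by rw [Fintype.prod_eq_single i (fun k hk => by simp [hk])],
    Pi.mulSingle_eq_same] at this

theorem sum_bernoulliWeight_mul_apply_mul_apply (q : ι → 𝕜) {i j : ι} (hij : i ≠ j)
    (f g : Bool → 𝕜) :
    ∑ x, bernoulliWeight q x * (f (x i) * g (x j)) =
      (q i * f true + (1 - q i) * f false) * (q j * g true + (1 - q j) * g false) := by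
  have := sum_bernoulliWeight_mul_prod q (Pi.mulSingle i f * Pi.mulSingle j g)
  rwa [Fintype.prod_eq_mul i j hij (fun k hk => by simp [hk.1, hk.2]),
    sum_congr rfl fun x _ => by
      rw [Fintype.prod_eq_mul i j hij (fun k hk => by simp [hk.1, hk.2])],
    Pi.mul_apply, Pi.mul_apply, Pi.mulSingle_eq_same, Pi.mulSingle_eq_same,
    Pi.mulSingle_eq_of_ne hij.symm, Pi.mulSingle_eq_of_ne hij, mul_one, one_mul] at this

theorem sum_bernoulliWeight_smul_mul_mul (q : ι → 𝕜) (A N : R) (M : ι → R) :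
    ∑ x, bernoulliWeight q x •
        ((A + ∑ i, (if x i then 1 else 0 : 𝕜) • M i) * N *
          (A + ∑ i, (if x i then 1 else 0 : 𝕜) • M i)) =
      (A + ∑ i, q i • M i) * N * (A + ∑ i, q i • M i) +
        ∑ i, (q i * (1 - q i)) • (M i * N * M i) := by
  have hmean : ∑ x, bernoulliWeight q x • (A + ∑ i, (if x i then 1 else 0 : 𝕜) • M i) =
      A + ∑ i, q i • M i := by
    simp only [smul_add, sum_add_distrib, ← sum_smul, sum_bernoulliWeight, one_smul, smul_sum,
      smul_smul]
    rw [sum_comm]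
    refine congrArg (A + ·) (sum_congr rfl fun i _ => ?_)
    have hind := sum_bernoulliWeight_mul_apply q i (fun b => if b then 1 else 0)
    simp only [if_true, Bool.false_eq_true, if_false, mul_one, mul_zero, add_zero] at hind
    rw [← sum_smul, hind]
  have hcentered : ∀ x : ι → Bool, (A + ∑ i, (if x i then 1 else 0 : 𝕜) • M i) -
      (A + ∑ i, q i • M i) = ∑ i, ((if x i then 1 else 0) - q i) • M i := fun x ↦ by
    simp only [add_sub_add_left_eq_sub, ← sum_sub_distrib, sub_smul]
  rw [sum_smul_mul_mul_eq_mean_add_sum_centered _ (sum_bernoulliWeight q), hmean]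
  simp only [hcentered]
  rw [sum_smul_mul_mul_of_uncorrelated]
  · congr 1
    refine sum_congr rfl fun i _ => ?_
    rw [sum_bernoulliWeight_mul_apply q i (fun b => ((if b then 1 else 0) - q i) ^ 2)]
    congr 1
    simp only [if_true, Bool.false_eq_true, if_false]
    ring
  · intro i j hij
    rw [sum_bernoulliWeight_mul_apply_mul_apply q hij (fun b => (if b then 1 else 0) - q i)
      (fun b => (if b then 1 else 0) - q j)]
    simp only [if_true, Bool.false_eq_true, if_false]
    ring

end Bernoulli

def selRate (B nr nf : ℕ) : Fin nr ⊕ Fin nf → ℝ :=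
  Sum.elim (fun _ => (B : ℝ) / nr) (fun _ => (B : ℝ) / nf)

section UpdateOperator

variable {d nr nf : ℕ} (η α : ℝ) (B : ℕ) (HR : Fin nr → Matrix (Fin d) (Fin d) ℝ)
  (HF : Fin nf → Matrix (Fin d) (Fin d) ℝ)

def stepDir : Fin nr ⊕ Fin nf → Matrix (Fin d) (Fin d) ℝ :=
  Sum.elim (fun r => -(η * (1 - α) / B) • HR r) (fun f => (η * α / B) • HF f)

theorem selProb_mul_selProb (y : Fin nr ⊕ Fin nf → Bool) :
    selProb nr B (y ∘ Sum.inl) * selProb nf B (y ∘ Sum.inr) =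
      bernoulliWeight (selRate B nr nf) y := by
  simp [selProb, bernoulliWeight, selRate, Fintype.prod_sum_type]

theorem Jop_sumArrowEquivProdArrow (y : Fin nr ⊕ Fin nf → Bool) :
    Jop η α B HR HF (Equiv.sumArrowEquivProdArrow _ _ _ y) =
      1 + ∑ i, (if y i then 1 else 0 : ℝ) • stepDir η α B HR HF i := by
  rw [Jop, Fintype.sum_sum_type, sub_eq_add_neg, add_assoc, smul_sum, smul_sum,
    ← sum_neg_distrib]
  congr 2 <;> refine sum_congr rfl fun _ _ => ?_ <;> split_ifs <;> simp_all [stepDir]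

theorem transpose_Jop (hHR : ∀ r, (HR r).IsSymm) (hHF : ∀ f, (HF f).IsSymm)
    (x : (Fin nr → Bool) × (Fin nf → Bool)) :
    (Jop η α B HR HF x)ᵀ = Jop η α B HR HF x := by
  simp [Jop, transpose_sum, apply_ite, (hHR _).eq, (hHF _).eq]

variable {B}

theorem Jbar_eq_one_add_sum (hB : B ≠ 0) :
    Jbar η α HR HF = 1 + ∑ i, selRate B nr nf i • stepDir η α B HR HF i := by
  rw [Jbar, Hbar, Hbar, Fintype.sum_sum_type, sub_eq_add_neg, add_assoc, smul_smul, smul_smul,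
    smul_sum, smul_sum, ← sum_neg_distrib]
  congr 2 <;> refine sum_congr rfl fun _ _ => ?_ <;>
    simp only [selRate, stepDir, Sum.elim_inl, Sum.elim_inr, smul_smul, ← neg_smul] <;>
    congr 1 <;> field_simp

theorem sum_selRate_mul_one_sub_smul_stepDir (hB : B ≠ 0) (N : Matrix (Fin d) (Fin d) ℝ) :
    ∑ i, (selRate B nr nf i * (1 - selRate B nr nf i)) •
        (stepDir η α B HR HF i * N * stepDir η α B HR HF i) =
      Cfc η α B nf • ∑ f, HF f * N * HF f + Crc η α B nr • ∑ r, HR r * N * HR r := by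
  have hvar : ∀ (n : ℕ) (c : ℝ) (H : Matrix (Fin d) (Fin d) ℝ),
      ((B : ℝ) / n * (1 - B / n)) • ((c / B) • H * N * ((c / B) • H)) =
        (c ^ 2 * (n : ℝ)⁻¹ * ((B : ℝ)⁻¹ - (n : ℝ)⁻¹)) • (H * N * H) := fun n c H ↦ by
    rw [smul_mul_assoc, smul_mul_assoc, mul_smul_comm, smul_smul, smul_smul]
    congr 1
    field_simp
  simp only [Fintype.sum_sum_type, selRate, stepDir, Sum.elim_inl, Sum.elim_inr, ← neg_div,
    hvar, Cfc, Crc, smul_sum, neg_sq, mul_pow, add_comm]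

end UpdateOperator

theorem stmt8_general (d nr nf B : ℕ) (hB : 0 < B) (η α : ℝ)
    (HR : Fin nr → Matrix (Fin d) (Fin d) ℝ) (HF : Fin nf → Matrix (Fin d) (Fin d) ℝ)
    (hHR : ∀ r, (HR r).PosSemidef) (hHF : ∀ f, (HF f).PosSemidef)
    (N : Matrix (Fin d) (Fin d) ℝ) :
    ∑ x : (Fin nr → Bool) × (Fin nf → Bool),
        (selProb nr B x.1 * selProb nf B x.2) •
          ((Jop η α B HR HF x)ᵀ * N * Jop η α B HR HF x)
      = Jbar η α HR HF * N * Jbar η α HR HF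
        + Cfc η α B nf • ∑ f, HF f * N * HF f
        + Crc η α B nr • ∑ r, HR r * N * HR r := by
  have hsymm : ∀ x, (Jop η α B HR HF x)ᵀ = Jop η α B HR HF x :=
    transpose_Jop η α B HR HF (fun r ↦ isHermitian_iff_isSymm.mp (hHR r).isHermitian)
      (fun f ↦ isHermitian_iff_isSymm.mp (hHF f).isHermitian)
  calc _ = ∑ y, bernoulliWeight (selRate B nr nf) y •
          ((1 + ∑ i, (if y i then 1 else 0 : ℝ) • stepDir η α B HR HF i) * N *
            (1 + ∑ i, (if y i then 1 else 0 : ℝ) • stepDir η α B HR HF i)) := by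
        rw [← (Equiv.sumArrowEquivProdArrow _ _ _).sum_comp]
        refine sum_congr rfl fun y _ => ?_
        rw [hsymm, Jop_sumArrowEquivProdArrow, ← selProb_mul_selProb]
        rfl
    _ = _ := by
      rw [sum_bernoulliWeight_smul_mul_mul, ← Jbar_eq_one_add_sum η α HR HF hB.ne',
        sum_selRate_mul_one_sub_smul_stepDir η α HR HF hB.ne', add_assoc]

/-- one-step second-moment identity.  For any fixed symmetric `N`,
`E[J_kᵀ N J_k] = J N J + C_f Σ_f H_f^F N H_f^F + C_r Σ_r H_r^R N H_r^R`, the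
expectation taken over the Bernoulli batch selections of step `k`. -/
theorem stmt8 (d nr nf B : ℕ) (hd : 1 ≤ d) (hnr : 1 ≤ nr) (hnf : 1 ≤ nf)
    (hB : 0 < B) (hBr : B ≤ nr) (hBf : B ≤ nf)
    (η α : ℝ) (hη : 0 < η) (hα : α ∈ Set.Icc (0 : ℝ) 1)
    (HR : Fin nr → Matrix (Fin d) (Fin d) ℝ) (HF : Fin nf → Matrix (Fin d) (Fin d) ℝ)
    (hHR : ∀ r, (HR r).PosSemidef) (hHF : ∀ f, (HF f).PosSemidef)
    (N : Matrix (Fin d) (Fin d) ℝ) (hN : N.IsSymm) :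
    ∑ x : (Fin nr → Bool) × (Fin nf → Bool),
        (selProb nr B x.1 * selProb nf B x.2) •
          ((Jop η α B HR HF x)ᵀ * N * Jop η α B HR HF x)
      = Jbar η α HR HF * N * Jbar η α HR HF
        + Cfc η α B nf • ∑ f, HF f * N * HF f
        + Crc η α B nr • ∑ r, HR r * N * HR r :=
  stmt8_general d nr nf B hB η α HR HF hHR hHF N

end
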